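/- arXiv:0805.3923 — 3 statements merged into one kernel-verified Lean document; each statement's English description precedes it below -/
import Mathlib

section
/- For real β, X > 0, and h ∈ ℕ with h ≥ 1, writing S(X,h,β) = ∑_{1 ≤ n ≤ X} ε(n) ε(n+h) e(β n) with e(x) = exp(2πix), one has S(X, 2h, β) = (1 + e(β)) · S(X/2, h, 2β) + O(1), where the implied constant is absolute. -/
open Complex Finset

/-- `e(x) = exp(2πix)`. -/
noncomputable def e (x : ℝ) : ℂ := Complex.exp (2 * Real.pi * Complex.I * x)

/-- `ε(n) = (-1)^(s₂ n)` where `s₂` is the binary digit sum. -/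
def eps (n : ℕ) : ℤ := (-1) ^ ((Nat.digits 2 n).sum)

/-- `S(Y,h,β) = ∑_{1 ≤ n ≤ Y} ε(n) ε(n+h) e(βn)`. -/
noncomputable def S (Y : ℝ) (h : ℕ) (β : ℝ) : ℂ :=
  ∑ n ∈ Finset.Icc 1 ⌊Y⌋₊, (eps n : ℂ) * (eps (n + h) : ℂ) * e (β * n)

/-! Since ε(2m) = ε(m) and ε(2m+1) = -ε(m), the summand of S(·, 2h, β) at n = 2m is the summand
of S(·, h, 2β) at m, and at n = 2m+1 it is the same times e(β): the two sign flips cancel.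
Summed over 0 ≤ n < 2K this is an exact identity with the factor 1 + e(β); the boundary summands
(n = 0, m = 0 and at most one unpaired n at the top) have modulus 1, whence the O(1). -/

lemma Finset.sum_range_two_mul {M : Type*} [AddCommMonoid M] (f : ℕ → M) (k : ℕ) :
    ∑ n ∈ range (2 * k), f n = ∑ m ∈ range k, f (2 * m) + ∑ m ∈ range k, f (2 * m + 1) := by
  induction k with
  | zero => simp
  | succ k ih =>
    rw [show 2 * (k + 1) = 2 * k + 1 + 1 by ring, sum_range_succ, sum_range_succ, sum_range_succ,
      sum_range_succ, ih]
    abel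

lemma norm_sum_range_sub_sum_range_le {E : Type*} [SeminormedAddCommGroup E] {f : ℕ → E}
    {C : ℝ} (hf : ∀ n, ‖f n‖ ≤ C) {m n : ℕ} (hmn : m ≤ n) :
    ‖∑ k ∈ range n, f k - ∑ k ∈ range m, f k‖ ≤ (n - m : ℕ) * C := by
  rw [← sum_Ico_eq_sub f hmn, ← Nat.card_Ico, ← nsmul_eq_mul, ← sum_const]
  exact norm_sum_le_of_le _ fun k _ => hf k

lemma norm_e (x : ℝ) : ‖e x‖ = 1 := by
  rw [e, Complex.norm_exp]
  simp [Complex.mul_re]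

lemma e_add (x y : ℝ) : e (x + y) = e x * e y := by
  rw [e, e, e, ← Complex.exp_add]
  push_cast
  ring_nf

lemma norm_eps (n : ℕ) : ‖(eps n : ℂ)‖ = 1 := by
  simp [eps]

lemma eps_two_mul (n : ℕ) : eps (2 * n) = eps n := by
  rcases Nat.eq_zero_or_pos n with rfl | hn
  · rfl
  · rw [eps, Nat.digits_def' one_lt_two (by omega), Nat.mul_mod_right,
      Nat.mul_div_cancel_left n two_pos, List.sum_cons, zero_add, eps]

lemma eps_two_mul_add_one (n : ℕ) : eps (2 * n + 1) = -eps n := by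
  rw [eps, Nat.digits_def' one_lt_two (by omega), Nat.mul_add_mod_self_left,
    show (2 * n + 1) / 2 = n by omega, List.sum_cons, pow_add, eps]
  simp

noncomputable def summand (h : ℕ) (β : ℝ) (n : ℕ) : ℂ := eps n * eps (n + h) * e (β * n)

lemma norm_summand (h : ℕ) (β : ℝ) (n : ℕ) : ‖summand h β n‖ = 1 := by
  rw [summand, norm_mul, norm_mul, norm_eps, norm_eps, norm_e, one_mul, one_mul]

lemma summand_two_mul (h : ℕ) (β : ℝ) (m : ℕ) : summand (2 * h) β (2 * m) = summand h (2 * β) m := by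
  rw [summand, summand, ← mul_add, eps_two_mul, eps_two_mul]
  push_cast
  ring_nf

lemma summand_two_mul_add_one (h : ℕ) (β : ℝ) (m : ℕ) :
    summand (2 * h) β (2 * m + 1) = e β * summand h (2 * β) m := by
  rw [summand, summand, show 2 * m + 1 + 2 * h = 2 * (m + h) + 1 by ring, eps_two_mul_add_one,
    eps_two_mul_add_one, show β * ((2 * m + 1 : ℕ) : ℝ) = 2 * β * m + β by push_cast; ring, e_add]
  push_cast
  ring

lemma S_eq_sum_range_sub (Y : ℝ) (h : ℕ) (β : ℝ) :
    S Y h β = ∑ n ∈ range (⌊Y⌋₊ + 1), summand h β n - summand h β 0 := by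
  rw [range_eq_Ico, sum_eq_sum_Ico_succ_bot (by positivity), zero_add,
    Ico_add_one_right_eq_Icc, S, add_sub_cancel_left]
  rfl

lemma sum_range_two_mul_summand (h : ℕ) (β : ℝ) (k : ℕ) :
    ∑ n ∈ range (2 * k), summand (2 * h) β n = (1 + e β) * ∑ m ∈ range k, summand h (2 * β) m := by
  simp only [sum_range_two_mul, summand_two_mul, summand_two_mul_add_one, ← mul_sum]
  ring

theorem S_two_mul_h : ∃ C : ℝ, ∀ (β X : ℝ) (h : ℕ), 0 < X → 1 ≤ h →
    ‖S X (2 * h) β - ((1 + e β) * S (X / 2) h (2 * β))‖ ≤ C := by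
  refine ⟨4, fun β X h _ _ => ?_⟩
  set N := ⌊X⌋₊
  have hfloor_half : ⌊X / 2⌋₊ = N / 2 := by
    exact_mod_cast Nat.floor_div_natCast X 2
  have htail : ‖∑ n ∈ range (2 * (N / 2 + 1)), summand (2 * h) β n
      - ∑ n ∈ range (N + 1), summand (2 * h) β n‖ ≤ 1 :=
    calc _ ≤ ((2 * (N / 2 + 1) - (N + 1) : ℕ) : ℝ) * 1 :=
          norm_sum_range_sub_sum_range_le (fun n => (norm_summand (2 * h) β n).le) (by omega)
      _ ≤ 1 := by rw [mul_one]; exact_mod_cast (by omega : 2 * (N / 2 + 1) - (N + 1) ≤ 1)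
  have hfactor : ‖1 + e β‖ ≤ 2 := by
    simpa [norm_e, one_add_one_eq_two] using norm_add_le (1 : ℂ) (e β)
  have hidentity : S X (2 * h) β - (1 + e β) * S (X / 2) h (2 * β)
      = (1 + e β) * summand h (2 * β) 0 - summand (2 * h) β 0
        - (∑ n ∈ range (2 * (N / 2 + 1)), summand (2 * h) β n
          - ∑ n ∈ range (N + 1), summand (2 * h) β n) := by
    rw [S_eq_sum_range_sub, S_eq_sum_range_sub, hfloor_half, sum_range_two_mul_summand]
    ring
  rw [hidentity]
  calc _ ≤ ‖1 + e β‖ * ‖summand h (2 * β) 0‖ + ‖summand (2 * h) β 0‖ + 1 := by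
        grw [norm_sub_le, norm_sub_le, norm_mul, htail]
    _ ≤ 4 := by
        rw [norm_summand, norm_summand]
        linarith
end

section
/- Suppose α is real, q, N, j₀ are positive integers and h is a positive integer with α = a/q + θ/q², (a,q) = 1, |θ| < 1, and 2^{N+j₀+2} h < q/10. Then for every j with 1 ≤ j ≤ j₀, ‖2^{j+N+1} · 2h · α‖ ≥ 9/(10q), where ‖x‖ denotes the distance of x to the nearest integer. -/
/-!
Write `m = 2^(j+N+2) h`, so the point is `m α`, and `0 < m < q / 10`. Since `(a, q) = 1` and
`0 < m < q`, the fraction `m a / q` is not an integer, hence lies at distance at least `1 / q`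
from the integers. Moving from `m a / q` to `m α` shifts the point by `m θ / q² < 1 / (10 q)`,
which can lower the distance to the nearest integer by at most that much.
-/

/-- `‖x‖ = min({x}, 1 - {x})`, the distance from `x` to the nearest integer. -/
noncomputable def distNearestInt (x : ℝ) : ℝ := min (Int.fract x) (1 - Int.fract x)

theorem distNearestInt_eq_abs_sub_round (x : ℝ) : distNearestInt x = |x - round x| :=
  (abs_sub_round_eq_min x).symm

theorem distNearestInt_sub_abs_le_distNearestInt_add (x y : ℝ) :
    distNearestInt x - |y| ≤ distNearestInt (x + y) := by
  rw [distNearestInt_eq_abs_sub_round, distNearestInt_eq_abs_sub_round]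
  have hround := round_le x (round (x + y))
  have htri : |x - round (x + y)| ≤ |x + y - round (x + y)| + |y| := by
    simpa only [sub_right_comm, add_sub_cancel_right] using
      abs_sub (x + y - round (x + y)) y
  linarith

theorem one_div_le_distNearestInt_intCast_div {b : ℤ} {q : ℕ} (hq : 0 < q)
    (hb : ¬ (q : ℤ) ∣ b) : 1 / (q : ℝ) ≤ distNearestInt (b / q) := by
  have hqR : (0 : ℝ) < q := by exact_mod_cast hq
  set k := round ((b : ℝ) / q)
  have hne : b - k * q ≠ 0 := fun h ↦ hb ⟨k, by linarith⟩
  have hone : (1 : ℝ) ≤ |((b - k * q : ℤ) : ℝ)| := by exact_mod_cast Int.one_le_abs hne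
  have hrescale : |(b : ℝ) / q - k| = |((b - k * q : ℤ) : ℝ)| / q := by
    rw [← abs_of_pos hqR, ← abs_div, abs_of_pos hqR]
    congr 1
    push_cast
    field_simp
  rw [distNearestInt_eq_abs_sub_round, hrescale]
  gcongr

theorem not_dvd_mul_of_coprime {a : ℤ} {q m : ℕ} (hgcd : Int.gcd a q = 1) (hm : 0 < m)
    (hmq : m < q) : ¬ (q : ℤ) ∣ m * a := by
  intro hdvd
  have hcop : IsCoprime (q : ℤ) a := by
    rw [Int.isCoprime_iff_gcd_eq_one, Int.gcd_comm]
    exact hgcd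
  have := Int.le_of_dvd (by exact_mod_cast hm) (hcop.dvd_of_dvd_mul_right hdvd)
  omega

theorem distNearestInt_mul_ge {α θ : ℝ} {a : ℤ} {q m : ℕ} (hgcd : Int.gcd a q = 1)
    (hθ : |θ| ≤ 1) (hα : α = (a : ℝ) / q + θ / q ^ 2) (hm : 0 < m) (hmq : m < q) :
    1 / (q : ℝ) - m / q ^ 2 ≤ distNearestInt (m * α) := by
  have hqR : (0 : ℝ) < q := by exact_mod_cast hm.trans hmq
  have hsplit : (m : ℝ) * α = ((m * a : ℤ) : ℝ) / q + m * θ / q ^ 2 := by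
    rw [hα]
    push_cast
    ring
  have hshift : |(m : ℝ) * θ / q ^ 2| ≤ m / q ^ 2 := by
    rw [abs_div, abs_mul, Nat.abs_cast, abs_of_pos (by positivity : (0 : ℝ) < q ^ 2)]
    gcongr
    exact mul_le_of_le_one_right (Nat.cast_nonneg m) hθ
  have hfrac := one_div_le_distNearestInt_intCast_div (hm.trans hmq)
    (not_dvd_mul_of_coprime hgcd hm hmq)
  have := distNearestInt_sub_abs_le_distNearestInt_add (((m * a : ℤ) : ℝ) / q) (m * θ / q ^ 2)
  rw [hsplit]
  linarith

theorem dist_lower_bound_general (α θ : ℝ) (a : ℤ) (q N j₀ h : ℕ)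
    (hh : 0 < h)
    (hgcd : Int.gcd a q = 1) (hθ : |θ| < 1)
    (hα : α = (a : ℝ) / q + θ / q ^ 2)
    (hsmall : (2 : ℝ) ^ (N + j₀ + 2) * h < q / 10) :
    ∀ j : ℕ, 1 ≤ j → j ≤ j₀ →
      distNearestInt ((2 : ℝ) ^ (j + N + 1) * (2 * h) * α) ≥ 9 / (10 * q) := by
  intro j _ hj
  set m : ℕ := 2 ^ (j + N + 2) * h
  have hm : 0 < m := by positivity
  have hmsmall : (m : ℝ) < q / 10 := by
    refine lt_of_le_of_lt ?_ hsmall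
    exact_mod_cast Nat.mul_le_mul_right h (Nat.pow_le_pow_right two_pos (by omega))
  have hqR : (0 : ℝ) < q := by linarith [(Nat.cast_pos.mpr hm : (0 : ℝ) < m)]
  have hmq : m < q := by
    have : (m : ℝ) < q := by linarith
    exact_mod_cast this
  have hpoint : (2 : ℝ) ^ (j + N + 1) * (2 * h) * α = m * α := by
    push_cast [m, pow_succ]
    ring
  have hshift : (m : ℝ) / q ^ 2 ≤ 1 / (10 * q) := by
    rw [div_le_div_iff₀ (by positivity) (by positivity)]
    nlinarith
  have hsplit : 9 / (10 * (q : ℝ)) = 1 / q - 1 / (10 * q) := by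
    field_simp
    ring
  rw [hpoint, ge_iff_le, hsplit]
  linarith [distNearestInt_mul_ge hgcd hθ.le hα hm hmq]

theorem dist_lower_bound (α θ : ℝ) (a : ℤ) (q N j₀ h : ℕ)
    (hq : 0 < q) (hN : 0 < N) (hj₀ : 0 < j₀) (hh : 0 < h)
    (hgcd : Int.gcd a q = 1) (hθ : |θ| < 1)
    (hα : α = (a : ℝ) / q + θ / q ^ 2)
    (hsmall : (2 : ℝ) ^ (N + j₀ + 2) * h < q / 10) :
    ∀ j : ℕ, 1 ≤ j → j ≤ j₀ →
      distNearestInt ((2 : ℝ) ^ (j + N + 1) * (2 * h) * α) ≥ 9 / (10 * q) :=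
  dist_lower_bound_general α θ a q N j₀ h hh hgcd hθ hα hsmall
end

section
/- (Gelfond, 1968) For j ∈ {0,1} and any positive integers m, l, the number T_j(X, l, m) of positive integers n ≤ X with n ≡ l (mod m) and n ∈ ℕ_j satisfies T_j(X, l, m) = X/(2m) + O(X^λ), where λ = log 3 / log 4 and the implied constant may depend on m. -/
/-!
Put `λ = log 3 / log 4`, so that `(2 ^ k) ^ λ = √3 ^ k`. Since
`2 · [s₂(n) ≡ j (mod 2)] = 1 + (-1) ^ j (-1) ^ s₂(n)`, the count is half the number of `n ≤ X`
in the residue class, which is `X / m + O(1)`, plus half the signed sum of `(-1) ^ s₂(n)` over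
that class. Detecting the class with the additive characters of `ZMod m` bounds the signed sum
by the largest of the sums `S(z, N) = ∑_{n < N} (-1) ^ s₂(n) zⁿ` with `|z| = 1`.

Splitting off the top binary digit gives `S(z, 2 ^ k + M) = S(z, 2 ^ k) - z ^ 2 ^ k S(z, M)`, so
`S(z, 2 ^ k) = ∏_{i < k} (1 - z ^ 2 ^ i)`. Each factor can have modulus up to `2`, but for
`|w| = 1` we have `|1 - w| (√3 + |1 - w²| / 2) ≤ √3 (√3 + |1 - w| / 2)`, with equality at
`w = e^{2πi/3}`. So the product telescopes to `O(√3 ^ k)`, and summing over the binary digits of a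
general `N` gives `|S(z, N)| = O(N ^ λ)`.
-/

open Finset Real

theorem Nat.digits_sum_add_two_pow {n k : ℕ} (hn : n < 2 ^ k) :
    (Nat.digits 2 (n + 2 ^ k)).sum = (Nat.digits 2 n).sum + 1 := by
  have hlen : (Nat.digits 2 n).length ≤ k := (Nat.digits_length_le_iff one_lt_two n).2 hn
  have happend := Nat.digits_append_zeroes_append_digits (b := 2)
    (k := k - (Nat.digits 2 n).length) (m := 1) (n := n) one_lt_two one_pos
  rw [Nat.add_sub_cancel' hlen, mul_one] at happend
  rw [← happend]
  simp

noncomputable def thueMorseSum (z : ℂ) (N : ℕ) : ℂ :=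
  ∑ n ∈ range N, (-1) ^ (Nat.digits 2 n).sum * z ^ n

theorem thueMorseSum_two_pow_add (z : ℂ) {k M : ℕ} (hM : M ≤ 2 ^ k) :
    thueMorseSum z (2 ^ k + M) = thueMorseSum z (2 ^ k) - z ^ 2 ^ k * thueMorseSum z M := by
  rw [thueMorseSum, sum_range_add, thueMorseSum, thueMorseSum, mul_sum, sub_eq_add_neg,
    ← sum_neg_distrib]
  congr 1
  refine sum_congr rfl fun n hn => ?_
  rw [add_comm, Nat.digits_sum_add_two_pow ((mem_range.1 hn).trans_le hM)]
  ring

theorem thueMorseSum_two_pow (z : ℂ) (k : ℕ) :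
    thueMorseSum z (2 ^ k) = ∏ i ∈ range k, (1 - z ^ 2 ^ i) := by
  induction k with
  | zero => simp [thueMorseSum]
  | succ k ih =>
    rw [pow_succ, mul_two, thueMorseSum_two_pow_add z le_rfl, prod_range_succ, ih]
    ring

theorem sq_mul_add_sqrt_three_mul_le_six {a b : ℝ} (hab : a ^ 2 + b ^ 2 = 4) :
    a ^ 2 * b + √3 * a ≤ 6 := by
  have h3 : √3 ^ 2 = 3 := sq_sqrt (by norm_num)
  nlinarith [sq_nonneg (a - √3), sq_nonneg (b - 1), sq_nonneg (a * b - √3)]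

theorem norm_one_sub_mul_le {w : ℂ} (hw : ‖w‖ = 1) :
    ‖1 - w‖ * (√3 + ‖1 - w ^ 2‖ / 2) ≤ √3 * (√3 + ‖1 - w‖ / 2) := by
  have hpar := parallelogram_law_with_norm ℝ (1 : ℂ) w
  rw [norm_one, hw] at hpar
  have hkey := sq_mul_add_sqrt_three_mul_le_six (a := ‖1 - w‖) (b := ‖1 + w‖) (by linarith)
  have hfactor : ‖1 - w ^ 2‖ = ‖1 - w‖ * ‖1 + w‖ := by
    rw [← norm_mul]; ring_nf
  have h3 : √3 * √3 = 3 := mul_self_sqrt (by norm_num)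
  rw [hfactor]
  nlinarith

theorem prod_mul_le_pow_mul {a g : ℕ → ℝ} {c : ℝ} (ha : ∀ k, 0 ≤ a k) (hc : 0 ≤ c)
    (h : ∀ k, a k * g (k + 1) ≤ c * g k) (n : ℕ) :
    (∏ k ∈ range n, a k) * g n ≤ c ^ n * g 0 := by
  induction n with
  | zero => simp
  | succ n ih =>
    calc (∏ k ∈ range (n + 1), a k) * g (n + 1)
        = (∏ k ∈ range n, a k) * (a n * g (n + 1)) := by rw [prod_range_succ, mul_assoc]
      _ ≤ (∏ k ∈ range n, a k) * (c * g n) :=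
        mul_le_mul_of_nonneg_left (h n) (prod_nonneg fun k _ => ha k)
      _ = c * ((∏ k ∈ range n, a k) * g n) := by ring
      _ ≤ c ^ (n + 1) * g 0 := by
        rw [pow_succ', mul_assoc]; exact mul_le_mul_of_nonneg_left ih hc

theorem norm_thueMorseSum_two_pow_le {z : ℂ} (hz : ‖z‖ = 1) (k : ℕ) :
    ‖thueMorseSum z (2 ^ k)‖ ≤ (√3 + 1) * √3 ^ k := by
  set a : ℕ → ℝ := fun i => ‖1 - z ^ 2 ^ i‖
  have htelescope := prod_mul_le_pow_mul (a := a) (g := fun i => √3 + a i / 2) (c := √3)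
    (fun i => norm_nonneg _) (sqrt_nonneg 3) (fun i => by
      simpa only [a, pow_succ, pow_mul] using
        norm_one_sub_mul_le (w := z ^ 2 ^ i) (by rw [norm_pow, hz, one_pow])) k
  have ha0 : a 0 ≤ 2 := by
    simpa [a, hz, one_add_one_eq_two] using norm_sub_le (1 : ℂ) z
  have hprod : 0 ≤ ∏ i ∈ range k, a i := prod_nonneg fun i _ => norm_nonneg _
  have hak : 0 ≤ a k := norm_nonneg _
  have h3 : 1 ≤ √3 := one_le_sqrt.2 (by norm_num)
  rw [thueMorseSum_two_pow, norm_prod]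
  nlinarith [pow_nonneg (sqrt_nonneg 3) k]

theorem norm_thueMorseSum_le_of_le_two_pow {z : ℂ} (hz : ‖z‖ = 1) {k N : ℕ} (hN : N ≤ 2 ^ k) :
    ‖thueMorseSum z N‖ ≤ (2 + √3) * √3 ^ k := by
  have h3 : 1 ≤ √3 := one_le_sqrt.2 (by norm_num)
  induction k generalizing N with
  | zero =>
    interval_cases N <;> simp [thueMorseSum] <;> linarith
  | succ k ih =>
    rcases le_or_gt N (2 ^ k) with hle | hlt
    · calc ‖thueMorseSum z N‖ ≤ (2 + √3) * √3 ^ k := ih hle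
        _ ≤ (2 + √3) * √3 ^ (k + 1) := by gcongr; omega
    obtain ⟨M, rfl⟩ := Nat.exists_eq_add_of_le hlt.le
    have hM : M ≤ 2 ^ k := by rw [pow_succ] at hN; omega
    calc ‖thueMorseSum z (2 ^ k + M)‖
        ≤ ‖thueMorseSum z (2 ^ k)‖ + ‖thueMorseSum z M‖ := by
          rw [thueMorseSum_two_pow_add z hM]
          refine (norm_sub_le _ _).trans_eq ?_
          rw [norm_mul, norm_pow, hz, one_pow, one_mul]
      _ ≤ (√3 + 1) * √3 ^ k + (2 + √3) * √3 ^ k :=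
          add_le_add (norm_thueMorseSum_two_pow_le hz k) (ih hM)
      _ = (2 + √3) * √3 ^ (k + 1) := by ring_nf; rw [sq_sqrt (by norm_num)]; ring

theorem two_rpow_log_three_div_log_four : (2 : ℝ) ^ (log 3 / log 4) = √3 := by
  have h4 : log 4 = 2 * log 2 := by
    rw [show (4 : ℝ) = 2 ^ 2 by norm_num, log_pow]; push_cast; ring
  rw [rpow_def_of_pos two_pos, h4, sqrt_eq_rpow, rpow_def_of_pos three_pos]
  have : log 2 ≠ 0 := (log_pos one_lt_two).ne'
  field_simp

theorem norm_thueMorseSum_le {z : ℂ} (hz : ‖z‖ = 1) (N : ℕ) :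
    ‖thueMorseSum z N‖ ≤ 7 * (N : ℝ) ^ (log 3 / log 4) := by
  rcases N.eq_zero_or_pos with rfl | hN
  · simp [thueMorseSum]; positivity
  set k := Nat.log 2 N
  have hlow : (2 : ℝ) ^ k ≤ N := by exact_mod_cast Nat.pow_log_le_self 2 hN.ne'
  have h3 : 1 ≤ √3 := one_le_sqrt.2 (by norm_num)
  have h33 : √3 ^ 2 = 3 := sq_sqrt (by norm_num)
  calc ‖thueMorseSum z N‖ ≤ (2 + √3) * √3 ^ (k + 1) :=
        norm_thueMorseSum_le_of_le_two_pow hz (Nat.lt_pow_succ_log_self one_lt_two N).le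
    _ = (3 + 2 * √3) * ((2 : ℝ) ^ k) ^ (log 3 / log 4) := by
        rw [← rpow_pow_comm zero_le_two, two_rpow_log_three_div_log_four]; ring_nf; rw [h33]; ring
    _ ≤ 7 * (N : ℝ) ^ (log 3 / log 4) := by
        gcongr
        nlinarith

theorem norm_sum_filter_mod_eq_le {m : ℕ} (hm : 0 < m) {f : ℕ → ℂ} {N : ℕ} {B : ℝ}
    (hB : ∀ z : ℂ, ‖z‖ = 1 → ‖∑ n ∈ range N, f n * z ^ n‖ ≤ B) (l : ℕ) :
    ‖∑ n ∈ range N with n % m = l % m, f n‖ ≤ B := by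
  have : NeZero m := ⟨hm.ne'⟩
  set ψ : AddChar (ZMod m) ℂ := ZMod.stdAddChar
  have horth : (m : ℂ) * ∑ n ∈ range N with n % m = l % m, f n =
      ∑ a : ZMod m, ψ (-(a * l)) * ∑ n ∈ range N, f n * ψ a ^ n := by
    simp_rw [mul_sum]
    rw [sum_comm, sum_filter]
    refine sum_congr rfl fun n _ => ?_
    have hchar : ∀ a : ZMod m, ψ (-(a * l)) * (f n * ψ a ^ n) = f n * ψ (a * (n - l)) := by
      intro a
      rw [← AddChar.map_nsmul_eq_pow, mul_left_comm, ← AddChar.map_add_eq_mul, nsmul_eq_mul]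
      ring_nf
    simp_rw [hchar]
    rw [← mul_sum, AddChar.sum_mulShift _ (ZMod.isPrimitive_stdAddChar m)]
    simp_rw [sub_eq_zero, ZMod.natCast_eq_natCast_iff', ZMod.card]
    split_ifs <;> ring
  have hmB : (m : ℝ) * ‖∑ n ∈ range N with n % m = l % m, f n‖ ≤ m * B :=
    calc (m : ℝ) * ‖∑ n ∈ range N with n % m = l % m, f n‖
        = ‖∑ a : ZMod m, ψ (-(a * l)) * ∑ n ∈ range N, f n * ψ a ^ n‖ := by
          rw [← horth, norm_mul, Complex.norm_natCast]
      _ ≤ ∑ a : ZMod m, ‖ψ (-(a * l)) * ∑ n ∈ range N, f n * ψ a ^ n‖ := norm_sum_le _ _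
      _ ≤ ∑ _a : ZMod m, B := sum_le_sum fun a _ => by
          rw [norm_mul, AddChar.norm_apply, one_mul]
          exact hB _ (AddChar.norm_apply _ _)
      _ = m * B := by simp
  exact le_of_mul_le_mul_left hmB (by exact_mod_cast hm)

theorem abs_sum_filter_mod_eq_neg_one_pow_digits_sum_le {m : ℕ} (hm : 0 < m) (l N : ℕ) :
    |∑ n ∈ range N with n % m = l % m, (-1 : ℝ) ^ (Nat.digits 2 n).sum|
      ≤ 7 * (N : ℝ) ^ (log 3 / log 4) := by
  rw [← Real.norm_eq_abs, ← Complex.norm_real]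
  push_cast
  exact norm_sum_filter_mod_eq_le hm (fun z hz => norm_thueMorseSum_le hz N) l

theorem abs_card_filter_mod_eq_sub_div_le {m : ℕ} (hm : 0 < m) (l N : ℕ) :
    |(#{n ∈ range N | n % m = l % m} : ℝ) - N / m| ≤ 1 := by
  have hcount : #{n ∈ range N | n % m = l % m} = N / m + if l % m < N % m then 1 else 0 := by
    rw [← Nat.count_modEq_card N hm l, Nat.count_eq_card_filter_range]; rfl
  have hm' : (0 : ℝ) < m := by exact_mod_cast hm
  have hdiv : (N : ℝ) / m = (N / m : ℕ) + (N % m : ℕ) / m := by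
    rw [div_eq_iff hm'.ne', add_mul, div_mul_cancel₀ _ hm'.ne']
    exact_mod_cast (Nat.div_add_mod' N m).symm
  have hrem : ((N % m : ℕ) : ℝ) / m < 1 := by
    rw [div_lt_one hm']; exact_mod_cast Nat.mod_lt N hm
  have hrem0 : 0 ≤ ((N % m : ℕ) : ℝ) / m := by positivity
  rw [hcount, hdiv, abs_le]
  split_ifs <;> push_cast <;> constructor <;> linarith

theorem two_mul_card_filter_mod_two_eq {α : Type*} (s : Finset α) (f : α → ℕ) {j : ℕ}
    (hj : j < 2) :
    2 * (#{x ∈ s | f x % 2 = j} : ℝ) = #s + (-1) ^ j * ∑ x ∈ s, (-1) ^ f x := by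
  rw [card_filter, Nat.cast_sum, mul_sum, card_eq_sum_ones, Nat.cast_sum, mul_sum,
    ← sum_add_distrib]
  refine sum_congr rfl fun x _ => ?_
  rw [neg_one_pow_eq_pow_mod_two (R := ℝ) (n := f x)]
  interval_cases j <;> rcases Nat.mod_two_eq_zero_or_one (f x) with h | h <;> simp [h] <;> norm_num

theorem abs_card_filter_Icc_sub_card_filter_range_le (p : ℕ → Prop) [DecidablePred p] (K : ℕ) :
    |(#{n ∈ Icc 1 K | p n} : ℝ) - #{n ∈ range (K + 1) | p n}| ≤ 1 := by
  have hrange : range (K + 1) = insert 0 (Icc 1 K) := by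
    ext n; simp only [mem_range, mem_insert, mem_Icc]; omega
  rw [hrange, filter_insert]
  split_ifs
  · rw [card_insert_of_notMem (by simp)]; simp
  · simp

theorem natCast_floor_add_one_rpow_le {X e : ℝ} (hX : 1 ≤ X) (he0 : 0 ≤ e) (he1 : e ≤ 1) :
    ((⌊X⌋₊ + 1 : ℕ) : ℝ) ^ e ≤ 2 * X ^ e :=
  calc ((⌊X⌋₊ + 1 : ℕ) : ℝ) ^ e ≤ (2 * X) ^ e := by
        gcongr; push_cast; linarith [Nat.floor_le (zero_le_one.trans hX)]
    _ = 2 ^ e * X ^ e := mul_rpow zero_le_two (by linarith)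
    _ ≤ 2 * X ^ e := by
        gcongr; simpa using rpow_le_rpow_of_exponent_le one_le_two he1

theorem gelfond_1968_general (j : ℕ) (hj : j < 2) (m l : ℕ) (hm : 0 < m) :
    ∃ C : ℝ, ∀ X : ℝ, 1 ≤ X →
      |(((Finset.Icc 1 ⌊X⌋₊).filter
          (fun n => n % m = l % m ∧ (Nat.digits 2 n).sum % 2 = j)).card : ℝ) -
        X / (2 * m)| ≤ C * X ^ (Real.log 3 / Real.log 4) := by
  refine ⟨9, fun X hX => ?_⟩
  set N := ⌊X⌋₊ + 1
  have hXN : X < N := by simpa [N] using Nat.lt_floor_add_one X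
  have hNX : (N : ℝ) ≤ X + 1 := by simpa [N] using Nat.floor_le (zero_le_one.trans hX)
  have hIcc := abs_card_filter_Icc_sub_card_filter_range_le
    (fun n => n % m = l % m ∧ (Nat.digits 2 n).sum % 2 = j) ⌊X⌋₊
  have hparity := two_mul_card_filter_mod_two_eq {n ∈ range N | n % m = l % m}
    (fun n => (Nat.digits 2 n).sum) hj
  rw [filter_filter] at hparity
  have hclass := abs_card_filter_mod_eq_sub_div_le hm l N
  have hsign := abs_sum_filter_mod_eq_neg_one_pow_digits_sum_le hm l N
  have hpow : (N : ℝ) ^ (log 3 / log 4) ≤ 2 * X ^ (log 3 / log 4) :=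
    natCast_floor_add_one_rpow_le hX (by positivity)
      ((div_le_one (log_pos (by norm_num))).2 (log_le_log (by norm_num) (by norm_num)))
  have hXpow : 1 ≤ X ^ (log 3 / log 4) := one_le_rpow hX (by positivity)
  have hshift : |(N : ℝ) / m - X / m| ≤ 1 := by
    have hm' : (1 : ℝ) ≤ m := by exact_mod_cast hm
    rw [← sub_div, abs_div, Nat.abs_cast, div_le_one (by linarith), abs_le]
    constructor <;> linarith
  rw [show X / (2 * m) = X / m / 2 by ring]
  rw [abs_le] at hIcc hclass hsign hshift ⊢
  rcases neg_one_pow_eq_or ℝ j with hsgn | hsgn <;> rw [hsgn] at hparity <;>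
    constructor <;> linarith

theorem gelfond_1968 (j : ℕ) (hj : j < 2) (m l : ℕ) (hm : 0 < m) (hl : 0 < l) :
    ∃ C : ℝ, ∀ X : ℝ, 1 ≤ X →
      |(((Finset.Icc 1 ⌊X⌋₊).filter
          (fun n => n % m = l % m ∧ (Nat.digits 2 n).sum % 2 = j)).card : ℝ) -
        X / (2 * m)| ≤ C * X ^ (Real.log 3 / Real.log 4) :=
  gelfond_1968_general j hj m l hm
end
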